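/- Let M be a two-counter machine. If M halts, then there exist a store s, a (possibly infinite) heap h, and a fixpoint interpretation I such that (s,h,I) ⊨ x ≠ nil ∧ (tcm(x) * true) ∧ (halt(y) * true) but (s,h,I) ⊭ tcm(x) * halt(y) * true; in particular, h can be taken to contain the ω-chain of next-linked nodes encoding the run of M, with y interpreted as the node of that chain whose state field equals the halting state 1. Hence the entailment is invalid when M halts. -/
import Mathlib


/-!
# Separation logic with fixpoint recursive definitions over possibly infinite heaps

Locations `Loc` (a countably infinite set with a distinguished element `nil`); fields
`next` (location-valued) and `state`, `c1`, `c2` (integer-valued); values are locations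
or integers.  Heaps assign to each field a partial function on `Loc` whose common
domain `dom(h) ⊆ Loc` may be infinite.  Recursively defined predicates are interpreted
by an interpretation `I` which is required to be a fixpoint (not necessarily the least
fixpoint) of the recursive definitions.
-/

namespace SLFix

open scoped Classical

/-- The fields: a pointer field `next` and integer-valued fields `state`, `c1`, `c2`. -/
inductive Field : Type where
  | next | state | c1 | c2
deriving DecidableEq

/-- Values: locations or integers. -/
abbrev Val (Loc : Type) := Loc ⊕ ℤ

/-- A (possibly infinite) heap: a domain together with a value for each field at each
location of the domain.  Outside the domain the maps take the junk value `inl nil`, so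
heaps are determined by their domain and field values on the domain. -/
structure Heap (Loc : Type) (nil : Loc) where
  dom : Set Loc
  val : Field → Loc → Val Loc
  val_outside : ∀ f l, l ∉ dom → val f l = Sum.inl nil

/-- `HeapUnion h₁ h₂ h`: `h` is the disjoint union `h₁ ⊎ h₂`. -/
def HeapUnion {Loc : Type} {nil : Loc} (h₁ h₂ h : Heap Loc nil) : Prop :=
  Disjoint h₁.dom h₂.dom ∧ h.dom = h₁.dom ∪ h₂.dom ∧
    (∀ f, ∀ l ∈ h₁.dom, h₁.val f l = h.val f l) ∧
    (∀ f, ∀ l ∈ h₂.dom, h₂.val f l = h.val f l)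

/-- Terms: variables, the constant `nil`, and integer constants. -/
inductive Trm (Var : Type) : Type where
  | var (v : Var)
  | nilT
  | intT (z : ℤ)

/-- Evaluation of terms under a store. -/
def evalTrm {Loc Var : Type} (nil : Loc) (s : Var → Val Loc) : Trm Var → Val Loc
  | .var v => s v
  | .nilT => Sum.inl nil
  | .intT z => Sum.inr z

/-- Formulas: `emp`, `true`, stack formulas (heap-independent, e.g. `t = t`, `t ≠ t`),
points-to atoms `x ↦_f t`, conjunction, separating conjunction, `ite` on a stack
condition, recursively defined predicates applied to terms, and existentials. -/
inductive Fml (Loc Var RSym : Type) : Type _ where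
  | emp
  | tru
  | stack (δ : (Var → Val Loc) → Prop)
  | pointsTo (x : Var) (f : Field) (t : Trm Var)
  | and (φ ψ : Fml Loc Var RSym)
  | star (φ ψ : Fml Loc Var RSym)
  | sIte (δ : (Var → Val Loc) → Prop) (φ ψ : Fml Loc Var RSym)
  | recP (R : RSym) (ts : List (Trm Var))
  | ex (v : Var) (φ : Fml Loc Var RSym)

/-- A set of recursive definitions: each recursive symbol has a list of formal
parameters and a body (in which recursive symbols occur only positively; note that the
syntax above has no negation, so this is automatic). -/
structure DefEnv (Loc Var RSym : Type) where
  params : RSym → List Var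
  body : RSym → Fml Loc Var RSym

variable {Loc Var RSym : Type} {nil : Loc}

/-- Satisfaction `(s, h, I) ⊨ φ`, relative to an interpretation `I` of the recursive
predicate symbols (on tuples of values, over a given heap). -/
def Sat (nil : Loc) (I : RSym → List (Val Loc) → Heap Loc nil → Prop) :
    Fml Loc Var RSym → (Var → Val Loc) → Heap Loc nil → Prop
  | .emp, _, h => h.dom = ∅
  | .tru, _, _ => True
  | .stack δ, s, _ => δ s
  | .pointsTo x f t, s, h =>
      ∃ l : Loc, s x = Sum.inl l ∧ h.dom = {l} ∧ h.val f l = evalTrm nil s t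
  | .and φ ψ, s, h => Sat nil I φ s h ∧ Sat nil I ψ s h
  | .star φ ψ, s, h =>
      ∃ h₁ h₂ : Heap Loc nil, HeapUnion h₁ h₂ h ∧ Sat nil I φ s h₁ ∧ Sat nil I ψ s h₂
  | .sIte δ φ ψ, s, h => (δ s ∧ Sat nil I φ s h) ∨ (¬ δ s ∧ Sat nil I ψ s h)
  | .recP R ts, s, h => I R (ts.map (evalTrm nil s)) h
  | .ex v φ, s, h => ∃ a : Val Loc, Sat nil I φ (Function.update s v a) h

/-- `I` is a fixpoint (not necessarily the least one) of the recursive definitions `D`: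
for every recursive symbol `R` and tuple of values, membership in `I` coincides with
satisfaction of the body of `R` under any store interpreting the formal parameters of
`R` by the given values. -/
def IsFixpoint (nil : Loc) (D : DefEnv Loc Var RSym)
    (I : RSym → List (Val Loc) → Heap Loc nil → Prop) : Prop :=
  ∀ (R : RSym) (vals : List (Val Loc)) (s : Var → Val Loc) (h : Heap Loc nil),
    List.Forall₂ (fun v a => s v = a) (D.params R) vals →
    (I R vals h ↔ Sat nil I (D.body R) s h)

/-- Validity of an entailment `φ ⊨ ψ`: for every store `s`, heap `h` and fixpoint
interpretation `I`, if `(s,h,I) ⊨ φ` then `(s,h,I) ⊨ ψ`. -/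
def EntailmentValid (nil : Loc) (D : DefEnv Loc Var RSym)
    (φ ψ : Fml Loc Var RSym) : Prop :=
  ∀ (s : Var → Val Loc) (h : Heap Loc nil)
    (I : RSym → List (Val Loc) → Heap Loc nil → Prop),
    IsFixpoint nil D I → Sat nil I φ s h → Sat nil I ψ s h

/-! ## Two-counter (Minsky) machines -/

/-- Instructions of a two-counter machine: increment a counter and go to a state, or
test-and-decrement a counter (if zero go to one state, else decrement and go to
another). -/
inductive TCMInstr : Type where
  | inc1 (l : ℤ)
  | inc2 (l : ℤ)
  | dec1 (ifZero ifPos : ℤ)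
  | dec2 (ifZero ifPos : ℤ)

/-- A two-counter machine: finitely many states, encoded as the integers
`0, …, numStates - 1`, with initial state `0` and halting state `1`, and a
deterministic transition for each state. -/
structure TCM : Type where
  numStates : ℕ
  trans : Fin numStates → TCMInstr

/-- One deterministic step of the machine on a configuration
(state, counter 1, counter 2). -/
def TCM.step (M : TCM) : ℤ × ℕ × ℕ → ℤ × ℕ × ℕ := fun c =>
  if h : 0 ≤ c.1 ∧ c.1.toNat < M.numStates then
    match M.trans ⟨c.1.toNat, h.2⟩ with
    | .inc1 l => (l, c.2.1 + 1, c.2.2)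
    | .inc2 l => (l, c.2.1, c.2.2 + 1)
    | .dec1 lz lp => if c.2.1 = 0 then (lz, c.2.1, c.2.2) else (lp, c.2.1 - 1, c.2.2)
    | .dec2 lz lp => if c.2.2 = 0 then (lz, c.2.1, c.2.2) else (lp, c.2.1, c.2.2 - 1)
  else c

/-- The configuration of the unique run of `M` from state `0` with counters `(0, 0)`
after `n` steps. -/
def TCM.config (M : TCM) (n : ℕ) : ℤ × ℕ × ℕ := M.step^[n] (0, 0, 0)

/-- `M` halts iff its run reaches the halting state `1`. -/
def TCM.Halts (M : TCM) : Prop := ∃ n : ℕ, (M.config n).1 = 1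

/-! ## The encoded formulas

Variables are natural numbers; the free variables `x` and `y` of the entailment are
`0` and `1`.  The single recursive symbol (`RSym := Unit`) is `tcm_run`, with formal
parameter the variable `10`; the bound variables `y, q, i, j, q', i', j'` inside the
body are `11, …, 17`. -/

/-- The stack formula `transition(q, i, j, q', i', j')` expressing one valid step of
the machine `M` (counters are nonnegative integers). -/
def transitionPred (M : TCM) (q i j q' i' j' : ℕ) : (ℕ → Val Loc) → Prop := fun s =>
  ∃ a b c a' b' c' : ℤ,
    s q = Sum.inr a ∧ s i = Sum.inr b ∧ s j = Sum.inr c ∧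
    s q' = Sum.inr a' ∧ s i' = Sum.inr b' ∧ s j' = Sum.inr c' ∧
    0 ≤ b ∧ 0 ≤ c ∧ 0 ≤ b' ∧ 0 ≤ c' ∧
    M.step (a, b.toNat, c.toNat) = (a', b'.toNat, c'.toNat)

/-- The body of the recursive definition of `tcm_run(x)` (with `x` the variable `10`):
`ite(x = nil, emp, ∃y,q,i,j. ((x ↦_next y ∧ x ↦_state q ∧ x ↦_c1 i ∧ x ↦_c2 j) *
ite(y = nil, emp, ∃q',i',j'. ((y ↦_state q' ∧ y ↦_c1 i' ∧ y ↦_c2 j') * true)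
∧ transition(q,i,j,q',i',j') ∧ tcm_run(y))))`. -/
def tcmRunBody (M : TCM) : Fml Loc ℕ Unit :=
  .sIte (fun s => s 10 = Sum.inl nil)
    .emp
    (.ex 11 (.ex 12 (.ex 13 (.ex 14
      (.star
        (.and (.pointsTo 10 .next (.var 11))
          (.and (.pointsTo 10 .state (.var 12))
            (.and (.pointsTo 10 .c1 (.var 13)) (.pointsTo 10 .c2 (.var 14)))))
        (.sIte (fun s => s 11 = Sum.inl nil)
          .emp
          (.ex 15 (.ex 16 (.ex 17
            (.and
              (.star
                (.and (.pointsTo 11 .state (.var 15))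
                  (.and (.pointsTo 11 .c1 (.var 16)) (.pointsTo 11 .c2 (.var 17))))
                .tru)
              (.and (.stack (transitionPred M 12 13 14 15 16 17))
                (.recP () [.var 11]))))))))))))

/-- The set of recursive definitions: the single definition of `tcm_run`. -/
def tcmDefs (M : TCM) : DefEnv Loc ℕ Unit where
  params := fun _ => [10]
  body := fun _ => tcmRunBody (nil := nil) M

/-- `tcm(x) := tcm_run(x) ∧ (x ↦_state 0 * true)`, with `x` a given variable. -/
def tcmFml (x : ℕ) : Fml Loc ℕ Unit :=
  .and (.recP () [.var x]) (.star (.pointsTo x .state (.intT 0)) .tru)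

/-- `halt(y) := y ↦_state 1`, with `y` a given variable. -/
def haltFml (y : ℕ) : Fml Loc ℕ Unit := .pointsTo y .state (.intT 1)

/-- The left-hand side of the entailment:
`x ≠ nil ∧ (tcm(x) * true) ∧ (halt(y) * true)`. -/
def lhsFml : Fml Loc ℕ Unit :=
  .and (.stack (fun s => s 0 ≠ Sum.inl nil))
    (.and (.star (tcmFml (Loc := Loc) 0) .tru) (.star (haltFml (Loc := Loc) 1) .tru))

/-- The right-hand side of the entailment: `tcm(x) * halt(y) * true`. -/
def rhsFml : Fml Loc ℕ Unit :=
  .star (tcmFml (Loc := Loc) 0) (.star (haltFml (Loc := Loc) 1) .tru)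

end SLFix

open SLFix

section Aux

variable {Loc : Type} {nil : Loc} (M : TCM)

def NodeP (hh : Heap Loc nil) (l : Loc) (y q i j : Val Loc) : Prop :=
  hh.dom = {l} ∧ hh.val .next l = y ∧ hh.val .state l = q ∧
    hh.val .c1 l = i ∧ hh.val .c2 l = j

def TransP (q i j q' i' j' : Val Loc) : Prop :=
  ∃ a b c a' b' c' : ℤ,
    q = Sum.inr a ∧ i = Sum.inr b ∧ j = Sum.inr c ∧
    q' = Sum.inr a' ∧ i' = Sum.inr b' ∧ j' = Sum.inr c' ∧
    0 ≤ b ∧ 0 ≤ c ∧ 0 ≤ b' ∧ 0 ≤ c' ∧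
    M.step (a, b.toNat, c.toNat) = (a', b'.toNat, c'.toNat)

def BodyP (J : Val Loc → Heap Loc nil → Prop) (v : Val Loc) (hh : Heap Loc nil) : Prop :=
  (v = Sum.inl nil ∧ hh.dom = ∅) ∨
  (v ≠ Sum.inl nil ∧ ∃ (l : Loc) (y q i j : Val Loc) (h₁ h₂ : Heap Loc nil),
    v = Sum.inl l ∧ HeapUnion h₁ h₂ hh ∧ NodeP h₁ l y q i j ∧
    ((y = Sum.inl nil ∧ h₂.dom = ∅) ∨
     (y ≠ Sum.inl nil ∧ ∃ (m : Loc) (q' i' j' : Val Loc) (h₃ h₄ : Heap Loc nil),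
        y = Sum.inl m ∧ HeapUnion h₃ h₄ h₂ ∧
        h₃.dom = {m} ∧ h₃.val .state m = q' ∧ h₃.val .c1 m = i' ∧ h₃.val .c2 m = j' ∧
        TransP M q i j q' i' j' ∧ J y h₂)))

set_option maxHeartbeats 2000000 in
lemma sat_body_iff (Iarg : Unit → List (Val Loc) → Heap Loc nil → Prop)
    (s : ℕ → Val Loc) (hh : Heap Loc nil) :
    Sat nil Iarg (tcmRunBody (nil := nil) M) s hh ↔
      BodyP M (fun v h' => Iarg () [v] h') (s 10) hh := by
  simp only [tcmRunBody, Sat, evalTrm, Function.update_apply, List.map_cons, List.map_nil, reduceIte, Nat.reduceEqDiff, transitionPred, Function.update_apply]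
  constructor
  · rintro (⟨h1,h2⟩|⟨hne, y, q, i, j, h₁, h₂, hu,
      ⟨⟨l,hl,hd,hnext⟩,⟨l2,hl2,-,hstate⟩,⟨l3,hl3,-,hc1⟩,⟨l4,hl4,-,hc2⟩⟩, hrest⟩)
    · exact Or.inl ⟨h1,h2⟩
    · rw [hl] at hl2 hl3 hl4; cases hl2; cases hl3; cases hl4
      refine Or.inr ⟨hne, l, y, q, i, j, h₁, h₂, hl, hu, ⟨hd, hnext, hstate, hc1, hc2⟩, ?_⟩
      rcases hrest with ⟨hy, hd2⟩|⟨hyne, q',i',j',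
        ⟨h₃,h₄,hu2,⟨⟨m,hm,hd3,hs'⟩,⟨m2,hm2,-,hc1'⟩,⟨m3,hm3,-,hc2'⟩⟩,-⟩, htr, hJ⟩
      · exact Or.inl ⟨hy, hd2⟩
      · rw [hm] at hm2 hm3; cases hm2; cases hm3
        exact Or.inr ⟨hyne, m, q', i', j', h₃, h₄, hm, hu2, hd3, hs', hc1', hc2', htr, hJ⟩
  · rintro (⟨h1,h2⟩|⟨hne, l, y, q, i, j, h₁, h₂, hl, hu, ⟨hd, hnext, hstate, hc1, hc2⟩, hrest⟩)
    · exact Or.inl ⟨h1,h2⟩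
    · refine Or.inr ⟨hne, y, q, i, j, h₁, h₂, hu,
        ⟨⟨l,hl,hd,hnext⟩,⟨l,hl,hd,hstate⟩,⟨l,hl,hd,hc1⟩,⟨l,hl,hd,hc2⟩⟩, ?_⟩
      rcases hrest with ⟨hy, hd2⟩|⟨hyne, m, q', i', j', h₃, h₄, hm, hu2, hd3, hs', hc1', hc2', htr, hJ⟩
      · exact Or.inl ⟨hy, hd2⟩
      · exact Or.inr ⟨hyne, q', i', j',
          ⟨h₃, h₄, hu2, ⟨⟨m,hm,hd3,hs'⟩,⟨m,hm,hd3,hc1'⟩,⟨m,hm,hd3,hc2'⟩⟩, trivial⟩, htr, hJ⟩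


lemma bodyP_mono {J K : Val Loc → Heap Loc nil → Prop} (hJK : ∀ v hh, J v hh → K v hh)
    {v : Val Loc} {hh : Heap Loc nil} (hb : BodyP M J v hh) : BodyP M K v hh := by
  rcases hb with h | ⟨hne, l, y, q, i, j, h₁, h₂, hl, hu, hnode, hrest⟩
  · exact Or.inl h
  · refine Or.inr ⟨hne, l, y, q, i, j, h₁, h₂, hl, hu, hnode, ?_⟩
    rcases hrest with h | ⟨hyne, m, q', i', j', h₃, h₄, hm, hu2, hd3, hs', hc1', hc2', htr, hJ⟩
    · exact Or.inl h
    · exact Or.inr ⟨hyne, m, q', i', j', h₃, h₄, hm, hu2, hd3, hs', hc1', hc2', htr,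
        hJK _ _ hJ⟩

/-- The monotone operator whose fixpoints interpret `tcm_run`. -/
def FOp (nil : Loc) (M : TCM) :
    (Val Loc → Heap Loc nil → Prop) →o (Val Loc → Heap Loc nil → Prop) where
  toFun J := BodyP M J
  monotone' := by
    intro J K hJK v
    intro hh hb
    exact bodyP_mono M (fun v' hh' => hJK v' hh') hb

/-- The greatest fixpoint of the `tcm_run` operator. -/
def gfpF (nil : Loc) (M : TCM) : Val Loc → Heap Loc nil → Prop :=
  OrderHom.gfp (FOp nil M)

lemma gfpF_iff (v : Val Loc) (hh : Heap Loc nil) :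
    gfpF nil M v hh ↔ BodyP M (gfpF nil M) v hh := by
  conv_lhs => rw [gfpF, ← (FOp nil M).map_gfp]
  rfl

/-- The interpretation of the single recursive symbol. -/
def Interp (nil : Loc) (M : TCM) : Unit → List (Val Loc) → Heap Loc nil → Prop :=
  fun _ vals hh => ∃ v, vals = [v] ∧ gfpF nil M v hh

lemma interp_isFixpoint : IsFixpoint nil (tcmDefs (nil := nil) M) (Interp nil M) := by
  intro R vals s hh hfa
  have : vals = [s 10] := by
    cases hfa with
    | cons h10 htail => cases htail; rw [h10]
  subst this
  rw [show (tcmDefs (nil := nil) M).body R = tcmRunBody (nil := nil) M from rfl,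
    sat_body_iff]
  constructor
  · rintro ⟨v, hv, hg⟩
    obtain rfl : v = s 10 := by simpa using hv.symm
    exact bodyP_mono M (fun v' hh' hg' => ⟨v', rfl, hg'⟩) ((gfpF_iff M _ hh).mp hg)
  · intro hb
    refine ⟨s 10, rfl, (gfpF_iff M _ hh).mpr ?_⟩
    refine bodyP_mono M (fun v' hh' h' => ?_) hb
    rcases h' with ⟨w, hw, hg⟩
    obtain rfl : v' = w := by simpa using hw
    exact hg

section Chain

variable (e : ℕ → Loc)

/-- The field values of the `n`-th node of the chain encoding the run of `M`. -/
def nodeVal : Field → ℕ → Val Loc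
  | .next, n => Sum.inl (e (n + 1))
  | .state, n => Sum.inr (M.config n).1
  | .c1, n => Sum.inr ((M.config n).2.1 : ℤ)
  | .c2, n => Sum.inr ((M.config n).2.2 : ℤ)

open Classical in
/-- The sub-heap of the chain heap with nodes indexed by `S`. -/
noncomputable def heapOf (S : Set ℕ) : Heap Loc nil where
  dom := e '' S
  val f l := if l ∈ e '' S then nodeVal M e f (Function.invFun e l) else Sum.inl nil
  val_outside := by intro f l hl; simp [hl]

lemma heapOf_dom (S : Set ℕ) : (heapOf (nil := nil) M e S).dom = e '' S := rfl

lemma heapOf_val_mem (hinj : Function.Injective e) {S : Set ℕ} {n : ℕ} (hn : n ∈ S) (f : Field) :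
    (heapOf (nil := nil) M e S).val f (e n) = nodeVal M e f n := by
  have hmem : e n ∈ e '' S := ⟨n, hn, rfl⟩
  have hinv : Function.invFun e (e n) = n := Function.leftInverse_invFun hinj n
  simp only [heapOf, if_pos hmem, hinv]

lemma heapUnion_heapOf (hinj : Function.Injective e) {S T : Set ℕ} (hST : Disjoint S T) :
    HeapUnion (heapOf (nil := nil) M e S) (heapOf (nil := nil) M e T)
      (heapOf (nil := nil) M e (S ∪ T)) := by
  refine ⟨?_, ?_, ?_, ?_⟩
  case refine_2 => rw [heapOf_dom, heapOf_dom, heapOf_dom]; exact Set.image_union e S T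
  · rw [Set.disjoint_left]
    rintro x ⟨n, hn, rfl⟩ ⟨m, hm, hme⟩
    obtain rfl : m = n := hinj hme
    exact (Set.disjoint_left.mp hST hn) hm
  · rintro f l ⟨n, hn, rfl⟩
    rw [heapOf_val_mem M e hinj hn, heapOf_val_mem M e hinj (Set.mem_union_left T hn)]
  · rintro f l ⟨n, hn, rfl⟩
    rw [heapOf_val_mem M e hinj hn, heapOf_val_mem M e hinj (Set.mem_union_right S hn)]

/-- The empty heap. -/
def emptyHeap : Heap Loc nil where
  dom := ∅
  val _ _ := Sum.inl nil
  val_outside := by intros; rfl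

lemma heapUnion_empty (h : Heap Loc nil) : HeapUnion h (emptyHeap (nil := nil)) h :=
  ⟨by simp [emptyHeap], by simp [emptyHeap], fun _ _ _ => rfl, by simp [emptyHeap]⟩

/-- `h₁` is a sub-heap of `h`. -/
def SubHeap (h₁ h : Heap Loc nil) : Prop :=
  h₁.dom ⊆ h.dom ∧ ∀ f l, l ∈ h₁.dom → h₁.val f l = h.val f l

lemma heapUnion_subL {h₁ h₂ h : Heap Loc nil} (hu : HeapUnion h₁ h₂ h) : SubHeap h₁ h :=
  ⟨by rw [hu.2.1]; exact Set.subset_union_left, fun f l hl => hu.2.2.1 f l hl⟩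

lemma heapUnion_subR {h₁ h₂ h : Heap Loc nil} (hu : HeapUnion h₁ h₂ h) : SubHeap h₂ h :=
  ⟨by rw [hu.2.1]; exact Set.subset_union_right, fun f l hl => hu.2.2.2 f l hl⟩

lemma SubHeap.trans {h₁ h₂ h₃ : Heap Loc nil} (h12 : SubHeap (nil := nil) h₁ h₂)
    (h23 : SubHeap (nil := nil) h₂ h₃) : SubHeap (nil := nil) h₁ h₃ :=
  ⟨h12.1.trans h23.1, fun f l hl => (h12.2 f l hl).trans (h23.2 f l (h12.1 hl))⟩

lemma config_succ (n : ℕ) : M.config (n + 1) = M.step (M.config n) :=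
  Function.iterate_succ_apply' _ _ _

lemma transP_config (k : ℕ) :
    TransP (Loc := Loc) M (Sum.inr (M.config k).1) (Sum.inr ((M.config k).2.1 : ℤ))
      (Sum.inr ((M.config k).2.2 : ℤ)) (Sum.inr (M.config (k + 1)).1)
      (Sum.inr ((M.config (k + 1)).2.1 : ℤ)) (Sum.inr ((M.config (k + 1)).2.2 : ℤ)) := by
  refine ⟨(M.config k).1, ((M.config k).2.1 : ℤ), ((M.config k).2.2 : ℤ),
    (M.config (k + 1)).1, ((M.config (k + 1)).2.1 : ℤ), ((M.config (k + 1)).2.2 : ℤ),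
    rfl, rfl, rfl, rfl, rfl, rfl, by positivity, by positivity, by positivity,
    by positivity, ?_⟩
  simp only [Int.toNat_natCast]
  rw [← config_succ]

lemma ici_split (k : ℕ) : ({k} : Set ℕ) ∪ Set.Ici (k + 1) = Set.Ici k := by
  ext n; simp [Set.mem_Ici]; omega

lemma disj_singleton_ici (k : ℕ) : Disjoint ({k} : Set ℕ) (Set.Ici (k + 1)) := by
  simp [Set.disjoint_left]

lemma heapUnion_node (hinj : Function.Injective e) (k : ℕ) :
    HeapUnion (heapOf (nil := nil) M e {k}) (heapOf (nil := nil) M e (Set.Ici (k + 1)))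
      (heapOf (nil := nil) M e (Set.Ici k)) := by
  have := heapUnion_heapOf (nil := nil) M e hinj (disj_singleton_ici k)
  rwa [ici_split] at this

/-- Coinduction: the chain suffixes form a post-fixpoint of the `tcm_run` operator. -/
lemma chain_le_body (hinj : Function.Injective e) (henil : ∀ n, e n ≠ nil) (k : ℕ) :
    BodyP M (fun v hh => ∃ m : ℕ, v = Sum.inl (e m) ∧ hh = heapOf (nil := nil) M e (Set.Ici m))
      (Sum.inl (e k)) (heapOf (nil := nil) M e (Set.Ici k)) := by
  refine Or.inr ⟨by simp [henil k], e k, Sum.inl (e (k + 1)),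
    Sum.inr (M.config k).1, Sum.inr ((M.config k).2.1 : ℤ), Sum.inr ((M.config k).2.2 : ℤ),
    heapOf (nil := nil) M e {k}, heapOf (nil := nil) M e (Set.Ici (k + 1)), rfl,
    heapUnion_node M e hinj k,
    ⟨by rw [heapOf_dom, Set.image_singleton],
      heapOf_val_mem M e hinj (Set.mem_singleton _) .next, heapOf_val_mem M e hinj (Set.mem_singleton _) .state,
      heapOf_val_mem M e hinj (Set.mem_singleton _) .c1, heapOf_val_mem M e hinj (Set.mem_singleton _) .c2⟩, ?_⟩
  refine Or.inr ⟨by simp [henil (k + 1)], e (k + 1),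
    Sum.inr (M.config (k + 1)).1, Sum.inr ((M.config (k + 1)).2.1 : ℤ),
    Sum.inr ((M.config (k + 1)).2.2 : ℤ),
    heapOf (nil := nil) M e {k + 1}, heapOf (nil := nil) M e (Set.Ici (k + 2)), rfl,
    heapUnion_node M e hinj (k + 1),
    by rw [heapOf_dom, Set.image_singleton],
    heapOf_val_mem M e hinj (Set.mem_singleton _) .state, heapOf_val_mem M e hinj (Set.mem_singleton _) .c1,
    heapOf_val_mem M e hinj (Set.mem_singleton _) .c2,
    transP_config M k, ⟨k + 1, rfl, rfl⟩⟩

lemma chain_gfpF (hinj : Function.Injective e) (henil : ∀ n, e n ≠ nil) (k : ℕ) :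
    gfpF nil M (Sum.inl (e k)) (heapOf (nil := nil) M e (Set.Ici k)) := by
  have hle : (fun v hh => ∃ m : ℕ, v = Sum.inl (e m) ∧
      hh = heapOf (nil := nil) M e (Set.Ici m)) ≤ gfpF nil M := by
    apply OrderHom.le_gfp
    rintro v hh ⟨m, rfl, rfl⟩
    exact chain_le_body M e hinj henil m
  exact hle _ _ ⟨k, rfl, rfl⟩

/-- Every heap on which `tcm_run(e k)` holds and which is a sub-heap of the full chain
heap contains every later node of the chain. -/
lemma chain_mem (hinj : Function.Injective e) (henil : ∀ n, e n ≠ nil) (m : ℕ) : ∀ (k : ℕ) (hh : Heap Loc nil),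
    gfpF nil M (Sum.inl (e k)) hh →
    SubHeap (nil := nil) hh (heapOf (nil := nil) M e (Set.Ici 0)) →
    e (k + m) ∈ hh.dom := by
  induction m with
  | zero =>
    intro k hh hg hsub
    rw [gfpF_iff] at hg
    rcases hg with ⟨hnil', -⟩ | ⟨-, l, y, q, i, j, h₁, h₂, hl, hu, hnode, -⟩
    · exact absurd (by injection hnil') (henil k)
    · obtain rfl : l = e k := by injection hl.symm
      rw [hu.2.1]
      exact Set.mem_union_left _ (by rw [hnode.1]; rfl)
  | succ m ih =>
    intro k hh hg hsub
    rw [gfpF_iff] at hg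
    rcases hg with ⟨hnil', -⟩ | ⟨-, l, y, q, i, j, h₁, h₂, hl, hu, hnode, hrest⟩
    · exact absurd (by injection hnil') (henil k)
    · obtain rfl : l = e k := by injection hl.symm
      have hek : e k ∈ h₁.dom := by rw [hnode.1]; rfl
      have hy : y = Sum.inl (e (k + 1)) := by
        rw [← hnode.2.1, hu.2.2.1 .next _ hek, hsub.2 .next _ ((heapUnion_subL hu).1 hek),
          heapOf_val_mem M e hinj (Set.mem_Ici.mpr (Nat.zero_le k)) .next]
        rfl
      rcases hrest with ⟨hy0, -⟩ | ⟨-, mloc, q', i', j', h₃, h₄, hm, hu2, hd3, hs', hc1', hc2', htr, hJ⟩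
      · rw [hy] at hy0; exact absurd (by injection hy0) (henil (k + 1))
      · rw [hy] at hJ
        have hsub2 : SubHeap (nil := nil) h₂ (heapOf (nil := nil) M e (Set.Ici 0)) :=
          (heapUnion_subR hu).trans hsub
        have := ih (k + 1) h₂ hJ hsub2
        have hmem : e (k + 1 + m) ∈ hh.dom := by
          rw [hu.2.1]; exact Set.mem_union_right _ this
        rwa [show k + 1 + m = k + (m + 1) by omega] at hmem

end Chain
end Aux


open SLFix in
/-- Let `M` be a two-counter machine.  If `M` halts, then there exist a
store `s`, a (possibly infinite) heap `h`, and a fixpoint interpretation `I` such that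
`(s,h,I) ⊨ x ≠ nil ∧ (tcm(x) * true) ∧ (halt(y) * true)` but
`(s,h,I) ⊭ tcm(x) * halt(y) * true`; in particular, `h` can be taken to contain the
ω-chain of `next`-linked nodes encoding the run of `M`, with `y` interpreted as a node
of that chain whose `state` field equals the halting state `1`.  Hence the entailment is
invalid when `M` halts. -/
theorem entailment_invalid_of_halts
    {Loc : Type} [Countable Loc] [Infinite Loc] (nil : Loc) (M : TCM)
    (hM : M.Halts) :
    ∃ (s : ℕ → Val Loc) (h : Heap Loc nil)
      (I : Unit → List (Val Loc) → Heap Loc nil → Prop),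
      IsFixpoint nil (tcmDefs (nil := nil) M) I ∧
      Sat nil I (lhsFml (nil := nil)) s h ∧
      ¬ Sat nil I (rhsFml (Loc := Loc)) s h ∧
      -- the heap contains the ω-chain encoding the run of `M`, `x` is interpreted as
      -- its first node, and `y` as a node of the chain whose state is `1`
      ∃ e : ℕ → Loc, Function.Injective e ∧
        (∀ n : ℕ, e n ∈ h.dom ∧
          h.val .next (e n) = Sum.inl (e (n + 1)) ∧
          h.val .state (e n) = Sum.inr (M.config n).1 ∧
          h.val .c1 (e n) = Sum.inr ((M.config n).2.1 : ℤ) ∧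
          h.val .c2 (e n) = Sum.inr ((M.config n).2.2 : ℤ)) ∧
        s 0 = Sum.inl (e 0) ∧
        ∃ n : ℕ, (M.config n).1 = 1 ∧ s 1 = Sum.inl (e n) := by
  obtain ⟨n₀, hn₀⟩ := hM
  have hcompl : ({nil} : Set Loc)ᶜ.Infinite := (Set.finite_singleton nil).infinite_compl
  set E := hcompl.natEmbedding with hE
  set e : ℕ → Loc := fun n => (E n : Loc) with he
  have hinj : Function.Injective e := fun a b hab => E.injective (Subtype.ext hab)
  have henil : ∀ n, e n ≠ nil := fun n hn => (E n).2 (by simp [he] at hn; simp [hn])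
  set s : ℕ → Val Loc := fun n => if n = 1 then Sum.inl (e n₀) else Sum.inl (e 0) with hs
  have hs0 : s 0 = Sum.inl (e 0) := rfl
  have hs1 : s 1 = Sum.inl (e n₀) := rfl
  set H : Heap Loc nil := heapOf (nil := nil) M e (Set.Ici 0) with hH
  have hmemH : ∀ n : ℕ, e n ∈ H.dom := fun n => ⟨n, Set.mem_Ici.mpr (Nat.zero_le n), rfl⟩
  have hvalH : ∀ (n : ℕ) (f : Field), H.val f (e n) = nodeVal M e f n := fun n f =>
    heapOf_val_mem M e hinj (Set.mem_Ici.mpr (Nat.zero_le n)) f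
  have huhalt : HeapUnion (heapOf (nil := nil) M e {n₀})
      (heapOf (nil := nil) M e (Set.Ici 0 \ {n₀})) H := by
    have hdisj : Disjoint ({n₀} : Set ℕ) (Set.Ici 0 \ {n₀}) := by
      simp [Set.disjoint_left]
    have := heapUnion_heapOf (nil := nil) M e hinj hdisj
    have hset : ({n₀} : Set ℕ) ∪ (Set.Ici 0 \ {n₀}) = Set.Ici 0 := by
      ext x; by_cases hx : x = n₀ <;> simp [Set.mem_Ici, hx]
    rwa [hset] at this
  refine ⟨s, H, Interp nil M, interp_isFixpoint M, ?_, ?_, ?_⟩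
  · -- lhs
    simp only [lhsFml, tcmFml, haltFml, Sat, evalTrm, List.map_cons, List.map_nil]
    refine ⟨by rw [hs0]; simp [henil 0], ⟨H, emptyHeap (nil := nil), heapUnion_empty H,
      ⟨⟨Sum.inl (e 0), by rw [hs0], chain_gfpF M e hinj henil 0⟩,
        heapOf (nil := nil) M e {0}, heapOf (nil := nil) M e (Set.Ici 1),
        heapUnion_node M e hinj 0,
        ⟨e 0, hs0, by rw [heapOf_dom, Set.image_singleton],
          (heapOf_val_mem M e hinj (Set.mem_singleton _) Field.state).trans rfl⟩,
        trivial⟩, trivial⟩,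
      heapOf (nil := nil) M e {n₀}, heapOf (nil := nil) M e (Set.Ici 0 \ {n₀}), huhalt,
      ⟨e n₀, hs1, by rw [heapOf_dom, Set.image_singleton], ?_⟩, trivial⟩
    rw [heapOf_val_mem M e hinj (Set.mem_singleton _) Field.state]
    simp [nodeVal, hn₀, evalTrm]
  · -- not rhs
    intro hsat
    simp only [rhsFml, tcmFml, haltFml, Sat, evalTrm, List.map_cons, List.map_nil] at hsat
    obtain ⟨h₁, h₂, hu, ⟨⟨v, hv, hg⟩, -⟩, h₃, h₄, hu2, ⟨l, hl, hd3, -⟩, -⟩ := hsat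
    obtain rfl : v = Sum.inl (e 0) := by rw [hs0] at hv; simpa using hv.symm
    have hmem1 : e n₀ ∈ h₁.dom := by
      have := chain_mem M e hinj henil n₀ 0 h₁ hg ((heapUnion_subL hu).trans ?_)
      · simpa using this
      · exact ⟨subset_rfl, fun _ _ _ => rfl⟩
    obtain rfl : l = e n₀ := by rw [hs1] at hl; injection hl.symm
    have hmem2 : e n₀ ∈ h₂.dom := by
      rw [hu2.2.1]; exact Set.mem_union_left _ (by rw [hd3]; rfl)
    exact Set.disjoint_left.mp hu.1 hmem1 hmem2
  · exact ⟨e, hinj, fun n => ⟨hmemH n, hvalH n .next, hvalH n .state, hvalH n .c1,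
      hvalH n .c2⟩, hs0, n₀, hn₀, hs1⟩
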